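/- Let A_a : ℝⁿ → Matrix_{N×N}(ℝ) (a = 1, …, n) be smooth, and let m : ℝⁿ → Matrix_{N×N}(ℝ) be smooth with m(x) invertible for every x. Define the gauge-transformed potential A*_a := m⁻¹ (∂_a m + A_a m) (the paper's equation (4.7)). Then at every point, □_η m = m · D* − D · m − Σ_{a,c} η^{ac} A_a ∂_c m + Σ_{a,c} η^{ac} (∂_c m) m⁻¹ (∂_a m + A_a m), where D := Σ_{a,c} η^{ac} ∂_c A_a and D* := Σ_{a,c} η^{ac} ∂_c A*_a. (This is the paper's equation (4.8), the wave equation satisfied by the generator m of the gauge transformation, specialized to the flat connection ∇ = ∂.) -/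

import Mathlib

/-- Partial derivative of a scalar field on ℝⁿ in the `a`-th coordinate direction. -/
noncomputable def pd {n : ℕ} (a : Fin n) (u : (Fin n → ℝ) → ℝ) : (Fin n → ℝ) → ℝ :=
  fun x => fderiv ℝ u x (Pi.single a 1)

/-- Entrywise partial derivative of a matrix-valued field on ℝⁿ. -/
noncomputable def pdM {n N : ℕ} (a : Fin n)
    (u : (Fin n → ℝ) → Matrix (Fin N) (Fin N) ℝ) :
    (Fin n → ℝ) → Matrix (Fin N) (Fin N) ℝ :=
  fun x => Matrix.of fun i j => pd a (fun y => u y i j) x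

/-- The η-d'Alembertian `□_η u := Σ_{a,b} η^{ab} ∂_a ∂_b u`, applied entrywise to a
matrix-valued field. -/
noncomputable def boxM {n N : ℕ} (η : Matrix (Fin n) (Fin n) ℝ)
    (u : (Fin n → ℝ) → Matrix (Fin N) (Fin N) ℝ) :
    (Fin n → ℝ) → Matrix (Fin N) (Fin N) ℝ :=
  fun x => ∑ a, ∑ b, η⁻¹ a b • pdM a (pdM b u) x

section helpers
variable {n N : ℕ}

private lemma contDiff_finprod {ι : Type*} (f : ι → (Fin n → ℝ) → ℝ) :
    ∀ (s : Finset ι), (∀ i ∈ s, ContDiff ℝ (⊤ : ℕ∞) (f i)) →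
      ContDiff ℝ (⊤ : ℕ∞) (fun x => ∏ i ∈ s, f i x) := by
  classical
  intro s
  induction s using Finset.induction_on with
  | empty => intro _; simpa using contDiff_const
  | insert _ _ ha ih =>
    intro h
    simp only [Finset.prod_insert ha]
    exact (h _ (Finset.mem_insert_self _ _)).mul
      (ih fun i hi => h i (Finset.mem_insert_of_mem hi))

private lemma contDiff_det (m : (Fin n → ℝ) → Matrix (Fin N) (Fin N) ℝ)
    (hm : ∀ i j, ContDiff ℝ (⊤ : ℕ∞) fun x => m x i j) :
    ContDiff ℝ (⊤ : ℕ∞) fun x => (m x).det := by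
  simp only [Matrix.det_apply']
  exact ContDiff.sum fun σ _ =>
    contDiff_const.mul (contDiff_finprod _ _ fun i _ => hm (σ i) i)

private lemma contDiff_inv_entry (m : (Fin n → ℝ) → Matrix (Fin N) (Fin N) ℝ)
    (hm : ∀ i j, ContDiff ℝ (⊤ : ℕ∞) fun x => m x i j)
    (hmunit : ∀ x, IsUnit (m x)) :
    ∀ i j, ContDiff ℝ (⊤ : ℕ∞) fun x => (m x)⁻¹ i j := by
  intro i j
  have hdet : ∀ x, (m x).det ≠ 0 := fun x =>
    ((Matrix.isUnit_iff_isUnit_det _).mp (hmunit x)).ne_zero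
  have hadj : ContDiff ℝ (⊤ : ℕ∞) fun x => (m x).adjugate i j := by
    simp only [Matrix.adjugate_apply]
    refine contDiff_det (fun x => (m x).updateRow j (Pi.single i 1)) ?_
    intro k l
    by_cases hk : k = j
    · simp only [Matrix.updateRow_apply, hk, if_true]; exact contDiff_const
    · simp only [Matrix.updateRow_apply, hk, if_false]; exact hm k l
  have heq : (fun x => (m x)⁻¹ i j) = fun x => ((m x).det)⁻¹ * (m x).adjugate i j := by
    funext x
    rw [Matrix.inv_def, Matrix.smul_apply, Ring.inverse_eq_inv', smul_eq_mul]
  rw [heq]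
  exact ((contDiff_det m hm).inv hdet).mul hadj

private lemma contDiff_pd (a : Fin n) (u : (Fin n → ℝ) → ℝ) (hu : ContDiff ℝ (⊤ : ℕ∞) u) :
    ContDiff ℝ (⊤ : ℕ∞) (pd a u) := by
  show ContDiff ℝ (⊤ : ℕ∞) fun x => fderiv ℝ u x (Pi.single a 1)
  exact (hu.fderiv_right (by simp)).clm_apply contDiff_const

private lemma pd_sum {ι : Type*} (a : Fin n) (s : Finset ι)
    (f : ι → (Fin n → ℝ) → ℝ) (x : Fin n → ℝ)
    (hf : ∀ i ∈ s, DifferentiableAt ℝ (f i) x) :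
    pd a (fun y => ∑ i ∈ s, f i y) x = ∑ i ∈ s, pd a (f i) x := by
  simp only [pd, fderiv_fun_sum hf, ContinuousLinearMap.coe_sum', Finset.sum_apply]

private lemma pd_mul (a : Fin n) (u v : (Fin n → ℝ) → ℝ) (x : Fin n → ℝ)
    (hu : DifferentiableAt ℝ u x) (hv : DifferentiableAt ℝ v x) :
    pd a (fun y => u y * v y) x = pd a u x * v x + u x * pd a v x := by
  simp only [pd, fderiv_fun_mul hu hv, ContinuousLinearMap.add_apply,
    ContinuousLinearMap.smul_apply, smul_eq_mul]
  ring

private lemma contDiff_entry_mul (u v : (Fin n → ℝ) → Matrix (Fin N) (Fin N) ℝ)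
    (hu : ∀ i j, ContDiff ℝ (⊤ : ℕ∞) fun x => u x i j)
    (hv : ∀ i j, ContDiff ℝ (⊤ : ℕ∞) fun x => v x i j) :
    ∀ i j, ContDiff ℝ (⊤ : ℕ∞) fun x => (u x * v x) i j := by
  intro i j
  simp only [Matrix.mul_apply]
  exact ContDiff.sum fun k _ => (hu i k).mul (hv k j)

private lemma contDiff_entry_add (u v : (Fin n → ℝ) → Matrix (Fin N) (Fin N) ℝ)
    (hu : ∀ i j, ContDiff ℝ (⊤ : ℕ∞) fun x => u x i j)
    (hv : ∀ i j, ContDiff ℝ (⊤ : ℕ∞) fun x => v x i j) :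
    ∀ i j, ContDiff ℝ (⊤ : ℕ∞) fun x => (u x + v x) i j := by
  intro i j
  simp only [Matrix.add_apply]
  exact (hu i j).add (hv i j)

private lemma pdM_mul (c : Fin n) (u v : (Fin n → ℝ) → Matrix (Fin N) (Fin N) ℝ)
    (hu : ∀ i j, ContDiff ℝ (⊤ : ℕ∞) fun x => u x i j)
    (hv : ∀ i j, ContDiff ℝ (⊤ : ℕ∞) fun x => v x i j) (x : Fin n → ℝ) :
    pdM c (fun y => u y * v y) x = pdM c u x * v x + u x * pdM c v x := by
  ext i j
  simp only [pdM, Matrix.of_apply, Matrix.add_apply, Matrix.mul_apply]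
  rw [pd_sum c Finset.univ (fun k y => u y i k * v y k j) x
    (fun k _ => (((hu i k).differentiable (by simp) x).mul ((hv k j).differentiable (by simp) x))),
    ← Finset.sum_add_distrib]
  refine Finset.sum_congr rfl fun k _ => ?_
  exact pd_mul c _ _ x ((hu i k).differentiable (by simp) x) ((hv k j).differentiable (by simp) x)

private lemma pdM_add (c : Fin n) (u v : (Fin n → ℝ) → Matrix (Fin N) (Fin N) ℝ)
    (hu : ∀ i j, ContDiff ℝ (⊤ : ℕ∞) fun x => u x i j)
    (hv : ∀ i j, ContDiff ℝ (⊤ : ℕ∞) fun x => v x i j) (x : Fin n → ℝ) :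
    pdM c (fun y => u y + v y) x = pdM c u x + pdM c v x := by
  ext i j
  simp only [pdM, Matrix.of_apply, Matrix.add_apply]
  simp only [pd, fderiv_fun_add ((hu i j).differentiable (by simp) x) ((hv i j).differentiable (by simp) x),
    ContinuousLinearMap.add_apply]

end helpers

/-- The generator `m` of the gauge transformation `A*_a = m⁻¹(∂_a m + A_a m)` satisfies
the wave equation
`□_η m = m D* − D m − Σ η^{ac} A_a ∂_c m + Σ η^{ac} (∂_c m) m⁻¹ (∂_a m + A_a m)`,
where `D = Σ η^{ac} ∂_c A_a` and `D* = Σ η^{ac} ∂_c A*_a`. -/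
theorem gauge_generator_wave_equation {n N : ℕ} (hn : 1 ≤ n)
    (η : Matrix (Fin n) (Fin n) ℝ) (hηsym : η.IsSymm) (hηinv : IsUnit η.det)
    (A : Fin n → (Fin n → ℝ) → Matrix (Fin N) (Fin N) ℝ)
    (hA : ∀ (a : Fin n) (i j : Fin N), ContDiff ℝ (⊤ : ℕ∞) fun x => A a x i j)
    (m : (Fin n → ℝ) → Matrix (Fin N) (Fin N) ℝ)
    (hm : ∀ i j : Fin N, ContDiff ℝ (⊤ : ℕ∞) fun x => m x i j)
    (hmunit : ∀ x, IsUnit (m x))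
    (Astar : Fin n → (Fin n → ℝ) → Matrix (Fin N) (Fin N) ℝ)
    (hAstardef : ∀ a x, Astar a x = (m x)⁻¹ * (pdM a m x + A a x * m x))
    (D Dstar : (Fin n → ℝ) → Matrix (Fin N) (Fin N) ℝ)
    (hDdef : ∀ x, D x = ∑ a, ∑ c, η⁻¹ a c • pdM c (A a) x)
    (hDstardef : ∀ x, Dstar x = ∑ a, ∑ c, η⁻¹ a c • pdM c (Astar a) x) :
    ∀ x, boxM η m x =
      m x * Dstar x - D x * m x
      - (∑ a, ∑ c, η⁻¹ a c • (A a x * pdM c m x))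
      + ∑ a, ∑ c, η⁻¹ a c • (pdM c m x * ((m x)⁻¹ * (pdM a m x + A a x * m x))) := by
  intro x
  have hdet : ∀ y, IsUnit (m y).det := fun y =>
    (Matrix.isUnit_iff_isUnit_det _).mp (hmunit y)
  have hminv : ∀ i j, ContDiff ℝ (⊤ : ℕ∞) fun x => (m x)⁻¹ i j :=
    contDiff_inv_entry m hm hmunit
  have hpdm : ∀ (a : Fin n) (i j : Fin N), ContDiff ℝ (⊤ : ℕ∞) fun x => pdM a m x i j := by
    intro a i j
    simpa [pdM] using contDiff_pd a _ (hm i j)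
  have hAstar : ∀ (a : Fin n) (i j : Fin N), ContDiff ℝ (⊤ : ℕ∞) fun x => Astar a x i j := by
    intro a i j
    have : (fun x => Astar a x i j)
        = fun x => ((m x)⁻¹ * (pdM a m x + A a x * m x)) i j := by
      funext y; rw [hAstardef]
    rw [this]
    exact contDiff_entry_mul _ _ hminv
      (contDiff_entry_add _ _ (hpdm a) (contDiff_entry_mul _ _ (hA a) hm)) i j
  have hsymm : ∀ a c, η⁻¹ c a = η⁻¹ a c := by
    intro a c
    have h : Matrix.transpose (η⁻¹) = η⁻¹ := by
      rw [Matrix.transpose_nonsing_inv, hηsym.eq]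
    have h2 : Matrix.transpose (η⁻¹) c a = η⁻¹ c a := by rw [h]
    rw [← h2, Matrix.transpose_apply]
  have hbox : boxM η m x = ∑ a, ∑ c, η⁻¹ a c • pdM c (pdM a m) x := by
    rw [boxM, Finset.sum_comm]
    exact Finset.sum_congr rfl fun a _ => Finset.sum_congr rfl fun c _ => by
      rw [hsymm a c]
  have key : ∀ a c, pdM c (pdM a m) x =
      pdM c m x * Astar a x + m x * pdM c (Astar a) x
      - pdM c (A a) x * m x - A a x * pdM c m x := by
    intro a c
    have h1 : (fun y => m y * Astar a y) = fun y => pdM a m y + A a y * m y := by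
      funext y
      rw [hAstardef, ← Matrix.mul_assoc, Matrix.mul_nonsing_inv _ (hdet y), Matrix.one_mul]
    have h2 := pdM_mul c m (Astar a) hm (hAstar a) x
    have h4 := pdM_mul c (A a) m (hA a) hm x
    have h3 : pdM c (fun y => m y * Astar a y) x
        = pdM c (pdM a m) x + pdM c (fun y => A a y * m y) x := by
      rw [h1]
      exact pdM_add c _ _ (hpdm a) (contDiff_entry_mul _ _ (hA a) hm) x
    rw [h2, h4] at h3
    -- h3 : X + Y = P + (Z + W)
    rw [eq_comm, ← sub_eq_iff_eq_add'] at h3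
    rw [← h3]
    abel
  rw [hbox, hDstardef x, hDdef x, Finset.mul_sum, Finset.sum_mul]
  simp_rw [Finset.mul_sum, Finset.sum_mul, mul_smul_comm, smul_mul_assoc]
  rw [← Finset.sum_sub_distrib, ← Finset.sum_sub_distrib, ← Finset.sum_add_distrib]
  refine Finset.sum_congr rfl fun a _ => ?_
  rw [← Finset.sum_sub_distrib, ← Finset.sum_sub_distrib, ← Finset.sum_add_distrib]
  refine Finset.sum_congr rfl fun c _ => ?_
  rw [key a c, ← hAstardef a x]
  simp only [smul_add, smul_sub]
  abel
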